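/- Let V be a smooth k-linear G-representation and W ⊆ V a G-stable subspace on which S is locally nilpotent (for every x ∈ W there is n ≥ 1 with Sⁿ·x = 0). Let w ∈ V, λ₀ ∈ k with λ₀ ≠ 0, and ψ : H → kˣ a group homomorphism, and assume: u·w − w ∈ W for all u ∈ I₁; h·w − ψ(h)·w ∈ W for all h ∈ H; and S·w − λ₀·w ∈ W. Then there exists w' ∈ V with w' − w ∈ W such that u·w' = w' for all u ∈ I₁, h·w' = ψ(h)·w' for all h ∈ H, and S·w' = λ₀·w'. (The technical core of the proof of Theorem 5.2 of the paper: lifting an I₁-invariant Hecke eigenvector along a quotient by a subrepresentation on which S is locally nilpotent.) -/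

import Mathlib

open Matrix

/-- The matrix `(t, Cλ; 0, 1)` as an element of `G = GL₂(F((t)))`. -/
noncomputable def SMat {F : Type*} [Field F] (l : F) : GL (Fin 2) (LaurentSeries F) :=
  Matrix.GeneralLinearGroup.mkOfDetNeZero
    !![HahnSeries.single (1 : ℤ) (1 : F), HahnSeries.C l; 0, 1]
    (by simp [Matrix.det_fin_two_of])

/-- `x ∈ 𝒪 = F[[t]]`, i.e. no negative coefficients. -/
def InO {F : Type*} [Field F] (x : LaurentSeries F) : Prop :=
  ∀ n : ℤ, n < 0 → x.coeff n = 0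

/-- `x ∈ t𝒪`. -/
def InTO {F : Type*} [Field F] (x : LaurentSeries F) : Prop :=
  ∀ n : ℤ, n ≤ 0 → x.coeff n = 0

/-- `x ∈ 𝒪ˣ`, i.e. `x ∈ 𝒪` with nonzero constant term. -/
def InOUnits {F : Type*} [Field F] (x : LaurentSeries F) : Prop :=
  InO x ∧ x.coeff 0 ≠ 0

/-- membership in the pro-p Iwahori subgroup `I₁`: matrices `(a, b; c, d)`
with entries in `𝒪`, determinant in `𝒪ˣ`, and `a − 1, d − 1, c ∈ t𝒪`. -/
def InI1 {F : Type*} [Field F] (g : GL (Fin 2) (LaurentSeries F)) : Prop :=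
  (∀ i j, InO ((g : Matrix (Fin 2) (Fin 2) (LaurentSeries F)) i j)) ∧
  InOUnits (Matrix.det (g : Matrix (Fin 2) (Fin 2) (LaurentSeries F))) ∧
  InTO ((g : Matrix (Fin 2) (Fin 2) (LaurentSeries F)) 0 0 - 1) ∧
  InTO ((g : Matrix (Fin 2) (Fin 2) (LaurentSeries F)) 1 1 - 1) ∧
  InTO ((g : Matrix (Fin 2) (Fin 2) (LaurentSeries F)) 1 0)

/-- membership in `K_n = {g ∈ GL₂(𝒪) : g ≡ 1 (mod tⁿ)}`. -/
def InKn {F : Type*} [Field F] (n : ℕ) (g : GL (Fin 2) (LaurentSeries F)) : Prop :=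
  (∀ i j, InO ((g : Matrix (Fin 2) (Fin 2) (LaurentSeries F)) i j)) ∧
  InOUnits (Matrix.det (g : Matrix (Fin 2) (Fin 2) (LaurentSeries F))) ∧
  (∀ i j, ∀ m : ℤ, m < (n : ℤ) →
    (((g : Matrix (Fin 2) (Fin 2) (LaurentSeries F)) - 1) i j).coeff m = 0)

/-!
Put `w₁ = λ₀⁻ᵐ Sᵐ w`, where `Sᵐ` kills `S w - λ₀ w ∈ W`; then `S w₁ = λ₀ w₁` and `w₁ ≡ w` modulo
`W`. Everything else rests on one observation: as `S` is locally nilpotent on `W` and `λ₀ ≠ 0`,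
the only `y ∈ W` with `S y = λ₀ y` is `0`.

Every `u ∈ I₁` is (lower unipotent)(diagonal)(upper unipotent), and each factor is moved past the
matrices `(t, Cλ; 0, 1)`:
* `(1, b; 0, 1)(t, Cλ; 0, 1) = (t, C(λ + b₀); 0, 1)(1, b'; 0, 1)` for `b = b₀ + t b'`. So the
  vectors `(1, b; 0, 1) w₁ - w₁ ∈ W`, `b ∈ 𝒪`, finitely many by smoothness, are each `λ₀⁻¹ S` of
  another one; a common power of `S` kills them all, so they vanish.
* For `h` diagonal in `GL₂(𝒪)`, `h (t, Cλ; 0, 1) = (t, Cλ'; 0, 1) h (1, β; 0, 1)` with `β ∈ 𝒪` and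
  `λ ↦ λ'` a bijection of `F`, so `h` commutes with `S` on `w₁`, and `h w₁ - κ w₁ ∈ W` is a
  `λ₀`-eigenvector of `S`, hence zero.
* `(1, 0; γ, 1)(t, Cλ; 0, 1) = (t, Cλ; 0, 1)(1, 0; γ', 1) h (1, β; 0, 1)` with `h ∈ I₁` diagonal
  and `γ'` of valuation one more than `γ`: descending induction on the valuation, starting from
  smoothness, shows that `(1, 0; γ, 1)` fixes `S w₁ = λ₀ w₁`.
-/
local notation "ϖ" => HahnSeries.single (1 : ℤ) (1 : _)

namespace HahnSeries

variable {Γ R : Type*} [LinearOrder Γ] [Ring R] {x y : HahnSeries Γ R} {m n : WithTop Γ}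

theorem le_orderTop_sub (hx : m ≤ x.orderTop) (hy : m ≤ y.orderTop) : m ≤ (x - y).orderTop :=
  (le_min hx hy).trans min_orderTop_le_orderTop_sub

theorem ne_zero_of_orderTop_eq_zero [Zero Γ] (h : x.orderTop = 0) : x ≠ 0 :=
  orderTop_ne_top.1 (h ▸ WithTop.zero_ne_top)

theorem add_le_orderTop_mul [AddCommMonoid Γ] [IsOrderedCancelAddMonoid Γ] (hx : m ≤ x.orderTop)
    (hy : n ≤ y.orderTop) : m + n ≤ (x * y).orderTop :=
  (add_le_add hx hy).trans orderTop_add_le_mul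

end HahnSeries

namespace LaurentSeries

variable {F : Type*} [Field F] {x : LaurentSeries F}

theorem inO_iff : InO x ↔ 0 ≤ x.orderTop := by
  simp [InO, HahnSeries.le_orderTop_iff_forall]

theorem inTO_iff : InTO x ↔ 1 ≤ x.orderTop := by
  simp [InTO, HahnSeries.le_orderTop_iff_forall, Int.lt_iff_add_one_le]

theorem inOUnits_iff : InOUnits x ↔ x.orderTop = 0 := by
  rw [InOUnits, inO_iff]
  refine ⟨fun ⟨h0, hc⟩ => le_antisymm (HahnSeries.orderTop_le_of_coeff_ne_zero hc) h0,
    fun h => ⟨h.ge, HahnSeries.coeff_orderTop_ne h⟩⟩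

theorem one_le_orderTop_of_coeff_zero (h0 : 0 ≤ x.orderTop) (hc : x.coeff 0 = 0) :
    1 ≤ x.orderTop := by
  rw [HahnSeries.le_orderTop_iff_forall] at h0 ⊢
  intro j hj
  rcases (show j < 0 ∨ j = 0 by norm_cast at hj; omega) with hj | rfl
  · exact h0 j (by exact_mod_cast hj)
  · exact hc

theorem orderTop_eq_zero_of_one_le_orderTop_sub_one (h : 1 ≤ (x - 1).orderTop) :
    x.orderTop = 0 :=
  ((HahnSeries.orderTop_self_sub_one_pos_iff x).1 (lt_of_lt_of_le (by norm_num) h)).1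

theorem orderTop_inv_eq_zero (h : x.orderTop = 0) : x⁻¹.orderTop = 0 := by
  have hx : x ≠ 0 := HahnSeries.ne_zero_of_orderTop_eq_zero h
  have := HahnSeries.orderTop_mul x x⁻¹
  rwa [mul_inv_cancel₀ hx, HahnSeries.orderTop_one, h, zero_add, eq_comm] at this

theorem inv_single_one_one : (ϖ : LaurentSeries F)⁻¹ = HahnSeries.single (-1) 1 :=
  inv_eq_of_mul_eq_one_right (by simp [HahnSeries.single_mul_single])

theorem zero_le_orderTop_C (r : F) : 0 ≤ (HahnSeries.C r : LaurentSeries F).orderTop := by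
  rw [HahnSeries.C_apply]
  exact HahnSeries.orderTop_single_le

theorem orderTop_C {r : F} (hr : r ≠ 0) : (HahnSeries.C r : LaurentSeries F).orderTop = 0 := by
  rw [HahnSeries.C_apply, HahnSeries.orderTop_single hr]
  rfl

theorem orderTop_inv_single_one_one :
    ((ϖ : LaurentSeries F)⁻¹).orderTop = ((-1 : ℤ) : WithTop ℤ) := by
  rw [inv_single_one_one, HahnSeries.orderTop_single one_ne_zero]

theorem exists_eq_mul_of_coeff_zero_eq_zero {x α : LaurentSeries F} (hx : 0 ≤ x.orderTop)
    (hx0 : x.coeff 0 = 0) (hα : α.orderTop = 0) : ∃ β, 0 ≤ β.orderTop ∧ x = ϖ * α * β := by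
  have hα0 : α ≠ 0 := HahnSeries.ne_zero_of_orderTop_eq_zero hα
  have hϖ : (ϖ : LaurentSeries F) ≠ 0 := HahnSeries.single_ne_zero one_ne_zero
  refine ⟨ϖ⁻¹ * α⁻¹ * x, ?_, by field_simp⟩
  have := HahnSeries.add_le_orderTop_mul (HahnSeries.add_le_orderTop_mul
    orderTop_inv_single_one_one.ge (orderTop_inv_eq_zero hα).ge)
    (one_le_orderTop_of_coeff_zero hx hx0)
  exact le_of_eq_of_le rfl this

theorem one_le_orderTop_inv_sub_one {x : LaurentSeries F} (h : 1 ≤ (x - 1).orderTop) :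
    1 ≤ (x⁻¹ - 1).orderTop := by
  have hx := orderTop_eq_zero_of_one_le_orderTop_sub_one h
  have hx0 : x ≠ 0 := HahnSeries.ne_zero_of_orderTop_eq_zero hx
  have : x⁻¹ - 1 = -(x⁻¹ * (x - 1)) := by field_simp; ring
  rw [this, HahnSeries.orderTop_neg]
  simpa using HahnSeries.add_le_orderTop_mul (orderTop_inv_eq_zero hx).ge h

end LaurentSeries

namespace Matrix.GeneralLinearGroup

variable {R : Type*} [CommRing R]

def lowerLeft (x : R) : GL (Fin 2) R :=
  ⟨!![1, 0; x, 1], !![1, 0; -x, 1], by simp [one_fin_two], by simp [one_fin_two]⟩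

theorem exists_coe_eq_diag {K : Type*} [Field K] {a d : K} (ha : a ≠ 0) (hd : d ≠ 0) :
    ∃ h : GL (Fin 2) K, (h : Matrix (Fin 2) (Fin 2) K) = !![a, 0; 0, d] :=
  ⟨mkOfDetNeZero _ (by simp [det_fin_two_of, ha, hd]), rfl⟩

theorem exists_eq_lowerLeft_mul_mul_upperRightHom {K : Type*} [Field K] {g : GL (Fin 2) K}
    {a b c d : K} (hg : (g : Matrix (Fin 2) (Fin 2) K) = !![a, b; c, d]) (ha : a ≠ 0) :
    ∃ h : GL (Fin 2) K, (h : Matrix (Fin 2) (Fin 2) K) = !![a, 0; 0, d - c * a⁻¹ * b] ∧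
      g = lowerLeft (c * a⁻¹) * h * upperRightHom (b * a⁻¹) := by
  refine ⟨lowerLeft (-(c * a⁻¹)) * g * upperRightHom (-(b * a⁻¹)), ?_, ?_⟩
  · ext i j
    simp only [coe_mul, hg, lowerLeft, upperRightHom_apply, mul_fin_two]
    fin_cases i <;> fin_cases j <;> simp <;> field_simp <;> ring
  · ext i j
    simp only [coe_mul, hg, lowerLeft, upperRightHom_apply, mul_fin_two]
    fin_cases i <;> fin_cases j <;> simp
    field_simp
    ring

end Matrix.GeneralLinearGroup

section HeckeMatrices

open Matrix.GeneralLinearGroup HahnSeries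

variable {F : Type*} [Field F]

theorem coe_SMat (l : F) : (SMat l : Matrix (Fin 2) (Fin 2) (LaurentSeries F)) =
    !![ϖ, C l; 0, 1] := rfl

theorem upperRightHom_mul_SMat (c : F) (s : LaurentSeries F) (l : F) :
    upperRightHom (C c + ϖ * s) * SMat l = SMat (l + c) * upperRightHom s := by
  refine Matrix.GeneralLinearGroup.ext fun i j => ?_
  simp only [coe_mul, coe_SMat, upperRightHom_apply, mul_fin_two]
  fin_cases i <;> fin_cases j <;> simp only [Fin.zero_eta, Fin.mk_one, of_apply, cons_val',
    cons_val_zero, cons_val_one, empty_val', cons_val_fin_one, map_add] <;> ring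

theorem mul_SMat_of_coe_eq_diag {g : GL (Fin 2) (LaurentSeries F)} {α δ β : LaurentSeries F}
    (hg : (g : Matrix (Fin 2) (Fin 2) (LaurentSeries F)) = !![α, 0; 0, δ]) {l c : F}
    (hβ : C l * α - C (c * l) * δ = ϖ * α * β) :
    g * SMat l = SMat (c * l) * (g * upperRightHom β) := by
  refine Matrix.GeneralLinearGroup.ext fun i j => ?_
  simp only [coe_mul, coe_SMat, hg, upperRightHom_apply, mul_fin_two]
  fin_cases i <;> fin_cases j <;> simp only [Fin.zero_eta, Fin.mk_one, of_apply, cons_val',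
    cons_val_zero, cons_val_one, empty_val', cons_val_fin_one] <;>
    first | ring1 | linear_combination hβ

theorem lowerLeft_mul_SMat (γ : LaurentSeries F) (l : F) (ha : 1 - C l * γ ≠ 0) :
    ∃ h : GL (Fin 2) (LaurentSeries F),
      (h : Matrix (Fin 2) (Fin 2) (LaurentSeries F)) = !![1 - C l * γ, 0; 0, (1 - C l * γ)⁻¹] ∧
      lowerLeft γ * SMat l = SMat l * (lowerLeft (γ * ϖ * (1 - C l * γ)⁻¹) * h *
        upperRightHom (C (-l ^ 2) * γ * ϖ⁻¹ * (1 - C l * γ)⁻¹)) := by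
  have hϖ : (ϖ : LaurentSeries F) ≠ 0 := single_ne_zero one_ne_zero
  have ha' : 1 - γ * C l ≠ 0 := by rwa [mul_comm]
  obtain ⟨h, hh⟩ := exists_coe_eq_diag ha (inv_ne_zero ha)
  refine ⟨h, hh, Matrix.GeneralLinearGroup.ext fun i j => ?_⟩
  simp only [coe_mul, coe_SMat, lowerLeft, upperRightHom_apply, hh, mul_fin_two, map_neg,
    map_pow]
  fin_cases i <;> fin_cases j <;> simp only [Fin.zero_eta, Fin.mk_one, of_apply, cons_val',
    cons_val_zero, cons_val_one, empty_val', cons_val_fin_one] <;>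
    field_simp <;> ring

end HeckeMatrices

section Membership

open Matrix.GeneralLinearGroup LaurentSeries

variable {F : Type*} [Field F]

theorem upperRightHom_inI1 {b : LaurentSeries F} (hb : 0 ≤ b.orderTop) :
    InI1 (upperRightHom b) := by
  simp [InI1, inO_iff, inTO_iff, inOUnits_iff, Fin.forall_fin_two, hb]

theorem inI1_of_coe_eq_diag {g : GL (Fin 2) (LaurentSeries F)} {a d : LaurentSeries F}
    (hg : (g : Matrix (Fin 2) (Fin 2) (LaurentSeries F)) = !![a, 0; 0, d])
    (ha : 1 ≤ (a - 1).orderTop) (hd : 1 ≤ (d - 1).orderTop) : InI1 g := by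
  have ha0 := orderTop_eq_zero_of_one_le_orderTop_sub_one ha
  have hd0 := orderTop_eq_zero_of_one_le_orderTop_sub_one hd
  simp [InI1, inO_iff, inTO_iff, inOUnits_iff, Fin.forall_fin_two, hg, ha0, hd0, ha, hd,
    HahnSeries.orderTop_mul]

theorem upperRightHom_inKn {N : ℕ} {b : LaurentSeries F}
    (hb : ((N : ℤ) : WithTop ℤ) ≤ b.orderTop) : InKn N (upperRightHom b) := by
  have hb0 : 0 ≤ b.orderTop := le_trans (by exact_mod_cast N.cast_nonneg) hb
  have hcoeff (m : ℤ) (hm : m < N) : b.coeff m = 0 :=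
    HahnSeries.le_orderTop_iff_forall.1 hb m (by exact_mod_cast hm)
  simpa [InKn, inO_iff, inOUnits_iff, Fin.forall_fin_two, hb0] using hcoeff

theorem lowerLeft_inKn {N : ℕ} {c : LaurentSeries F}
    (hc : ((N : ℤ) : WithTop ℤ) ≤ c.orderTop) : InKn N (lowerLeft c) := by
  have hc0 : 0 ≤ c.orderTop := le_trans (by exact_mod_cast N.cast_nonneg) hc
  have hcoeff (m : ℤ) (hm : m < N) : c.coeff m = 0 :=
    HahnSeries.le_orderTop_iff_forall.1 hc m (by exact_mod_cast hm)
  simpa [InKn, lowerLeft, inO_iff, inOUnits_iff, Fin.forall_fin_two, hc0] using hcoeff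

end Membership

namespace Module.End

variable {k V : Type*} [Field k] [AddCommGroup V] [Module k V] (T : Module.End k V)

theorem pow_apply_of_apply_eq_smul {c : k} {y : V} (hy : T y = c • y) (n : ℕ) :
    (T ^ n) y = c ^ n • y := by
  induction n with
  | zero => simp
  | succ n ih => rw [pow_succ', mul_apply, ih, map_smul, hy, smul_smul, pow_succ]

theorem eq_zero_of_apply_eq_smul_of_pow_apply_eq_zero {c : k} {y : V} {n : ℕ} (hc : c ≠ 0)
    (hy : T y = c • y) (hn : (T ^ n) y = 0) : y = 0 := by
  rw [T.pow_apply_of_apply_eq_smul hy] at hn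
  exact (smul_eq_zero.1 hn).resolve_left (pow_ne_zero n hc)

theorem exists_pow_apply_eq_zero_of_finite {s : Set V} (hs : s.Finite)
    (h : ∀ x ∈ s, ∃ n, (T ^ n) x = 0) : ∃ n, ∀ x ∈ s, (T ^ n) x = 0 := by
  induction s, hs using Set.Finite.induction_on with
  | empty => exact ⟨0, by simp⟩
  | @insert a s _ _ ih =>
    obtain ⟨n, hn⟩ := ih fun x hx => h x (Set.mem_insert_of_mem a hx)
    obtain ⟨m, hm⟩ := h a (Set.mem_insert a s)
    refine ⟨n + m, ?_⟩
    rintro x (rfl | hx)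
    · rw [pow_add, mul_apply, hm, map_zero]
    · rw [add_comm, pow_add, mul_apply, hn x hx, map_zero]

theorem eq_zero_of_forall_exists_apply_eq_smul {ι : Type*} {y : ι → V} {c : k} (hc : c ≠ 0)
    (hfin : (Set.range y).Finite) (hnil : ∀ i, ∃ n, (T ^ n) (y i) = 0)
    (hpre : ∀ i, ∃ j, T (y j) = c • y i) (i : ι) : y i = 0 := by
  obtain ⟨M, hM⟩ := T.exists_pow_apply_eq_zero_of_finite hfin (by rintro _ ⟨i, rfl⟩; exact hnil i)
  have hpow (n : ℕ) (i : ι) : ∃ j, (T ^ n) (y j) = c ^ n • y i := by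
    induction n generalizing i with
    | zero => exact ⟨i, by simp⟩
    | succ n ih =>
      obtain ⟨j, hj⟩ := hpre i
      obtain ⟨j', hj'⟩ := ih j
      exact ⟨j', by rw [pow_succ', mul_apply, hj', map_smul, hj, smul_smul, ← pow_succ]⟩
  obtain ⟨j, hj⟩ := hpow M i
  rw [hM _ ⟨j, rfl⟩, eq_comm] at hj
  exact (smul_eq_zero.1 hj).resolve_left (pow_ne_zero M hc)

theorem exists_sub_mem_apply_eq_smul {W : Submodule k V} (hW : ∀ x ∈ W, T x ∈ W) {w : V} {c : k}
    (hc : c ≠ 0) (hw : T w - c • w ∈ W) {n : ℕ} (hn : (T ^ n) (T w - c • w) = 0) :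
    ∃ w', w' - w ∈ W ∧ T w' = c • w' := by
  have hpow (j : ℕ) : (T ^ j) w - c ^ j • w ∈ W := by
    induction j with
    | zero => simp
    | succ j ih =>
      have : (T ^ (j + 1)) w - c ^ (j + 1) • w =
          T ((T ^ j) w - c ^ j • w) + c ^ j • (T w - c • w) := by
        rw [pow_succ', mul_apply, map_sub, map_smul, smul_sub, smul_smul, pow_succ]
        abel
      rw [this]
      exact W.add_mem (hW _ ih) (W.smul_mem _ hw)
  have hcn : c ^ n ≠ 0 := pow_ne_zero n hc
  refine ⟨(c ^ n)⁻¹ • (T ^ n) w, ?_, ?_⟩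
  · have : (c ^ n)⁻¹ • (T ^ n) w - w = (c ^ n)⁻¹ • ((T ^ n) w - c ^ n • w) := by
      rw [smul_sub, smul_smul, inv_mul_cancel₀ hcn, one_smul]
    rw [this]
    exact W.smul_mem _ (hpow n)
  · rw [map_smul, ← mul_apply, ← pow_succ', pow_succ, mul_apply, ← sub_add_cancel (T w) (c • w),
      map_add, hn, zero_add, map_smul, smul_comm]

end Module.End

theorem Representation.apply_sub_smul_mem_of_sub_mem {k G V : Type*} [CommRing k] [Monoid G]
    [AddCommGroup V] [Module k V] (ρ : Representation k G V) {W : Submodule k V}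
    (hW : ∀ g, ∀ x ∈ W, ρ g x ∈ W) {w w' : V} (hw' : w' - w ∈ W) {g : G} {κ : k}
    (h : ρ g w - κ • w ∈ W) : ρ g w' - κ • w' ∈ W := by
  have : ρ g w' - κ • w' = (ρ g (w' - w) - κ • (w' - w)) + (ρ g w - κ • w) := by
    rw [map_sub, smul_sub]; abel
  rw [this]
  exact W.add_mem (W.sub_mem (hW g _ hw') (W.smul_mem κ hw')) h

noncomputable def heckeOp {F k V : Type*} [Field F] [Fintype F] [CommRing k] [AddCommGroup V]
    [Module k V] (ρ : Representation k (GL (Fin 2) (LaurentSeries F)) V) : Module.End k V :=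
  ∑ l : F, ρ (SMat l)

section Lifting

open Matrix.GeneralLinearGroup HahnSeries LaurentSeries Module.End

variable {F k V : Type*} [Field F] [Field k] [AddCommGroup V] [Module k V]
  {ρ : Representation k (GL (Fin 2) (LaurentSeries F)) V} {W : Submodule k V} {v : V} {lam : k}

theorem upperRightHom_apply_eq_of_coeff_eq {N : ℕ} (hN : ∀ g, InKn N g → ρ g v = v)
    {b b' : LaurentSeries F} (hb : 0 ≤ b.orderTop) (hb' : 0 ≤ b'.orderTop)
    (h : ∀ j : Fin N, b.coeff j = b'.coeff j) :
    ρ (upperRightHom b) v = ρ (upperRightHom b') v := by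
  have hsub : ((N : ℤ) : WithTop ℤ) ≤ (b - b').orderTop := by
    refine le_orderTop_iff_forall.2 fun j hj => ?_
    rw [coeff_sub, sub_eq_zero]
    rcases lt_or_ge j 0 with hj0 | hj0
    · rw [coeff_eq_zero_of_lt_orderTop ((WithTop.coe_lt_coe.2 hj0).trans_le hb),
        coeff_eq_zero_of_lt_orderTop ((WithTop.coe_lt_coe.2 hj0).trans_le hb')]
    · lift j to ℕ using hj0
      exact h ⟨j, by exact_mod_cast hj⟩
  have : b = b' + (b - b') := by ring
  rw [this, AddChar.map_add_eq_mul, map_mul, Module.End.mul_apply, hN _ (upperRightHom_inKn hsub)]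

theorem apply_eq_self_of_inI1
    (hU : ∀ b : LaurentSeries F, 0 ≤ b.orderTop → ρ (upperRightHom b) v = v)
    (hD : ∀ (g : GL (Fin 2) (LaurentSeries F)) (a d : LaurentSeries F),
      (g : Matrix (Fin 2) (Fin 2) (LaurentSeries F)) = !![a, 0; 0, d] →
      1 ≤ (a - 1).orderTop → 1 ≤ (d - 1).orderTop → ρ g v = v)
    (hL : ∀ γ : LaurentSeries F, 1 ≤ γ.orderTop → ρ (lowerLeft γ) v = v)
    {u : GL (Fin 2) (LaurentSeries F)} (hu : InI1 u) : ρ u v = v := by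
  obtain ⟨hO, -, ha, hd, hc⟩ := hu
  simp only [inO_iff, inTO_iff] at hO ha hd hc
  have ha0 := orderTop_eq_zero_of_one_le_orderTop_sub_one ha
  have hai := (orderTop_inv_eq_zero ha0).ge
  obtain ⟨h, hh, hu⟩ := exists_eq_lowerLeft_mul_mul_upperRightHom
    (eta_fin_two (u : Matrix (Fin 2) (Fin 2) (LaurentSeries F)))
    (ne_zero_of_orderTop_eq_zero ha0)
  have hx : 1 ≤ (u 1 0 * (u 0 0)⁻¹).orderTop := by
    simpa using add_le_orderTop_mul hc hai
  have hy : 0 ≤ (u 0 1 * (u 0 0)⁻¹).orderTop := by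
    simpa using add_le_orderTop_mul (hO 0 1) hai
  have hd' : 1 ≤ (u 1 1 - u 1 0 * (u 0 0)⁻¹ * u 0 1 - 1).orderTop := by
    rw [sub_right_comm]
    exact le_orderTop_sub hd (by simpa using add_le_orderTop_mul hx (hO 0 1))
  rw [hu, map_mul, map_mul, Module.End.mul_apply, Module.End.mul_apply, hU _ hy,
    hD h _ _ hh ha hd', hL _ hx]

variable [Fintype F]

theorem heckeOp_apply (x : V) : heckeOp ρ x = ∑ l : F, ρ (SMat l) x :=
  LinearMap.sum_apply _ _ _

theorem heckeOp_apply_mem (hW : ∀ g, ∀ x ∈ W, ρ g x ∈ W) {x : V} (hx : x ∈ W) :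
    heckeOp ρ x ∈ W := by
  rw [heckeOp_apply]
  exact W.sum_mem fun l _ => hW _ _ hx

theorem apply_heckeOp_of_forall_mul_SMat {g : GL (Fin 2) (LaurentSeries F)} {x : V} (e : F ≃ F)
    (h : ∀ l, ∃ g', g * SMat l = SMat (e l) * g' ∧ ρ g' v = x) :
    ρ g (heckeOp ρ v) = heckeOp ρ x := by
  rw [heckeOp_apply, map_sum, heckeOp_apply, ← e.sum_comp fun l => ρ (SMat l) x]
  refine Finset.sum_congr rfl fun l _ => ?_
  obtain ⟨g', hg, hx⟩ := h l
  rw [← Module.End.mul_apply, ← map_mul, hg, map_mul, Module.End.mul_apply, hx]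

theorem upperRightHom_apply_sub_self (hv : heckeOp ρ v = lam • v) (c : F) (s : LaurentSeries F) :
    lam • (ρ (upperRightHom (C c + ϖ * s)) v - v) = heckeOp ρ (ρ (upperRightHom s) v - v) := by
  rw [smul_sub, ← map_smul, ← hv, map_sub, apply_heckeOp_of_forall_mul_SMat (Equiv.addRight c)
    fun l => ⟨_, upperRightHom_mul_SMat c s l, rfl⟩]

theorem upperRightHom_apply_eq_self (hnil : ∀ x ∈ W, ∃ n, (heckeOp ρ ^ n) x = 0) (hlam : lam ≠ 0)
    (hv : heckeOp ρ v = lam • v) (hI1 : ∀ u, InI1 u → ρ u v - v ∈ W) {N : ℕ}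
    (hN : ∀ g, InKn N g → ρ g v = v) {b : LaurentSeries F} (hb : 0 ≤ b.orderTop) :
    ρ (upperRightHom b) v = v := by
  let y (b : {b : LaurentSeries F // 0 ≤ b.orderTop}) : V := ρ (upperRightHom b.1) v - v
  let π (b : {b : LaurentSeries F // 0 ≤ b.orderTop}) (j : Fin N) : F := b.1.coeff j
  have hfac : y.FactorsThrough π := fun b b' h => by
    simp only [y, upperRightHom_apply_eq_of_coeff_eq hN b.2 b'.2 (congrFun h)]
  have hfin : (Set.range y).Finite := (Set.finite_range (Function.extend π y 0)).subset <|
    Set.range_subset_iff.2 fun b => ⟨π b, hfac.extend_apply 0 b⟩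
  have hpre (b) : ∃ b', heckeOp ρ (y b') = lam • y b := by
    obtain ⟨s, hs, hbs⟩ := exists_eq_mul_of_coeff_zero_eq_zero (x := b.1 - C (b.1.coeff 0))
      (le_orderTop_sub b.2 (zero_le_orderTop_C _)) (by simp) orderTop_one
    refine ⟨⟨s, hs⟩, ?_⟩
    rw [mul_one, sub_eq_iff_eq_add'] at hbs
    simp only [y]
    rw [hbs, upperRightHom_apply_sub_self hv]
  exact sub_eq_zero.1 <| (heckeOp ρ).eq_zero_of_forall_exists_apply_eq_smul hlam hfin
    (fun b => hnil _ (hI1 _ (upperRightHom_inI1 b.2))) hpre ⟨b, hb⟩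

theorem apply_heckeOp_of_coe_eq_diag
    (hU : ∀ b : LaurentSeries F, 0 ≤ b.orderTop → ρ (upperRightHom b) v = v)
    {g : GL (Fin 2) (LaurentSeries F)} {α δ : LaurentSeries F}
    (hg : (g : Matrix (Fin 2) (Fin 2) (LaurentSeries F)) = !![α, 0; 0, δ])
    (hα : α.orderTop = 0) (hδ : δ.orderTop = 0) :
    ρ g (heckeOp ρ v) = heckeOp ρ (ρ g v) := by
  have hα0 : α.coeff 0 ≠ 0 := coeff_orderTop_ne hα
  have hδ0 : δ.coeff 0 ≠ 0 := coeff_orderTop_ne hδ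
  set c := α.coeff 0 / δ.coeff 0
  refine apply_heckeOp_of_forall_mul_SMat (Equiv.mulLeft₀ c (div_ne_zero hα0 hδ0)) fun l => ?_
  have hx : 0 ≤ (C l * α - C (c * l) * δ).orderTop := by
    rw [C_mul_eq_smul, C_mul_eq_smul]
    exact le_orderTop_sub ((hα.ge).trans (orderTop_le_orderTop_smul _ _))
      ((hδ.ge).trans (orderTop_le_orderTop_smul _ _))
  have hx0 : (C l * α - C (c * l) * δ).coeff 0 = 0 := by
    rw [C_mul_eq_smul, C_mul_eq_smul, coeff_sub, coeff_smul, coeff_smul, smul_eq_mul, smul_eq_mul]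
    linear_combination -l * (div_mul_cancel₀ (α.coeff 0) hδ0)
  obtain ⟨β, hβ, hβeq⟩ := exists_eq_mul_of_coeff_zero_eq_zero hx hx0 hα
  refine ⟨_, mul_SMat_of_coe_eq_diag hg hβeq, ?_⟩
  rw [map_mul, Module.End.mul_apply, hU β hβ]

theorem apply_eq_smul_of_coe_eq_diag (hnil : ∀ x ∈ W, ∃ n, (heckeOp ρ ^ n) x = 0)
    (hlam : lam ≠ 0) (hv : heckeOp ρ v = lam • v)
    (hU : ∀ b : LaurentSeries F, 0 ≤ b.orderTop → ρ (upperRightHom b) v = v)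
    {g : GL (Fin 2) (LaurentSeries F)} {α δ : LaurentSeries F}
    (hg : (g : Matrix (Fin 2) (Fin 2) (LaurentSeries F)) = !![α, 0; 0, δ])
    (hα : α.orderTop = 0) (hδ : δ.orderTop = 0) {κ : k} (hκ : ρ g v - κ • v ∈ W) :
    ρ g v = κ • v := by
  obtain ⟨n, hn⟩ := hnil _ hκ
  refine sub_eq_zero.1 ((heckeOp ρ).eq_zero_of_apply_eq_smul_of_pow_apply_eq_zero hlam ?_ hn)
  rw [map_sub, map_smul, ← apply_heckeOp_of_coe_eq_diag hU hg hα hδ, hv, map_smul, smul_sub,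
    smul_comm κ lam]

theorem apply_eq_self_of_coe_eq_diag (hnil : ∀ x ∈ W, ∃ n, (heckeOp ρ ^ n) x = 0)
    (hlam : lam ≠ 0) (hv : heckeOp ρ v = lam • v) (hI1 : ∀ u, InI1 u → ρ u v - v ∈ W)
    (hU : ∀ b : LaurentSeries F, 0 ≤ b.orderTop → ρ (upperRightHom b) v = v)
    {g : GL (Fin 2) (LaurentSeries F)} {a d : LaurentSeries F}
    (hg : (g : Matrix (Fin 2) (Fin 2) (LaurentSeries F)) = !![a, 0; 0, d])
    (ha : 1 ≤ (a - 1).orderTop) (hd : 1 ≤ (d - 1).orderTop) : ρ g v = v := by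
  simpa using apply_eq_smul_of_coe_eq_diag hnil hlam hv hU hg
    (orderTop_eq_zero_of_one_le_orderTop_sub_one ha)
    (orderTop_eq_zero_of_one_le_orderTop_sub_one hd) (κ := 1)
    (by simpa using hI1 g (inI1_of_coe_eq_diag hg ha hd))

theorem lowerLeft_apply_eq_self_of_succ (hlam : lam ≠ 0) (hv : heckeOp ρ v = lam • v)
    (hU : ∀ b : LaurentSeries F, 0 ≤ b.orderTop → ρ (upperRightHom b) v = v)
    (hD : ∀ (g : GL (Fin 2) (LaurentSeries F)) (a d : LaurentSeries F),
      (g : Matrix (Fin 2) (Fin 2) (LaurentSeries F)) = !![a, 0; 0, d] →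
      1 ≤ (a - 1).orderTop → 1 ≤ (d - 1).orderTop → ρ g v = v)
    {m : ℤ} (hm : 1 ≤ m)
    (ih : ∀ γ : LaurentSeries F, ((m + 1 : ℤ) : WithTop ℤ) ≤ γ.orderTop → ρ (lowerLeft γ) v = v)
    {γ : LaurentSeries F} (hγ : (m : WithTop ℤ) ≤ γ.orderTop) : ρ (lowerLeft γ) v = v := by
  have key (l : F) : ∃ g', lowerLeft γ * SMat l = SMat (Equiv.refl F l) * g' ∧ ρ g' v = v := by
    have hlγ : (m : WithTop ℤ) ≤ (C l * γ).orderTop := by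
      simpa using add_le_orderTop_mul (zero_le_orderTop_C l) hγ
    have ha : 1 ≤ (1 - C l * γ - 1).orderTop := by
      rw [sub_sub_cancel_left, orderTop_neg]
      exact le_trans (by exact_mod_cast hm) hlγ
    have ha0 := orderTop_eq_zero_of_one_le_orderTop_sub_one ha
    have hai := orderTop_inv_eq_zero ha0
    obtain ⟨h, hh, hmul⟩ := lowerLeft_mul_SMat γ l (ne_zero_of_orderTop_eq_zero ha0)
    refine ⟨_, hmul, ?_⟩
    have hγ₂ : ((m + 1 : ℤ) : WithTop ℤ) ≤ (γ * ϖ * (1 - C l * γ)⁻¹).orderTop :=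
      le_of_eq_of_le (by norm_cast; simp) (add_le_orderTop_mul (add_le_orderTop_mul hγ
        (orderTop_single_le (a := 1) (r := (1 : F)))) hai.ge)
    have hβ : 0 ≤ (C (-l ^ 2) * γ * ϖ⁻¹ * (1 - C l * γ)⁻¹).orderTop :=
      le_trans (by norm_cast; omega) (add_le_orderTop_mul (add_le_orderTop_mul
        (add_le_orderTop_mul (zero_le_orderTop_C _) hγ) orderTop_inv_single_one_one.ge) hai.ge)
    rw [map_mul, map_mul, Module.End.mul_apply, Module.End.mul_apply, hU _ hβ,
      hD h _ _ hh ha (one_le_orderTop_inv_sub_one ha), ih _ hγ₂]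
  have := apply_heckeOp_of_forall_mul_SMat (Equiv.refl F) key
  rw [hv, map_smul] at this
  exact smul_right_injective V hlam this

theorem lowerLeft_apply_eq_self (hlam : lam ≠ 0) (hv : heckeOp ρ v = lam • v)
    (hU : ∀ b : LaurentSeries F, 0 ≤ b.orderTop → ρ (upperRightHom b) v = v)
    (hD : ∀ (g : GL (Fin 2) (LaurentSeries F)) (a d : LaurentSeries F),
      (g : Matrix (Fin 2) (Fin 2) (LaurentSeries F)) = !![a, 0; 0, d] →
      1 ≤ (a - 1).orderTop → 1 ≤ (d - 1).orderTop → ρ g v = v)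
    {N : ℕ} (hN : ∀ g, InKn N g → ρ g v = v) {γ : LaurentSeries F} (hγ : 1 ≤ γ.orderTop) :
    ρ (lowerLeft γ) v = v := by
  suffices ∀ d : ℕ, ∀ γ : LaurentSeries F, ((N - d : ℤ) : WithTop ℤ) ≤ γ.orderTop →
      1 ≤ γ.orderTop → ρ (lowerLeft γ) v = v from
    this N γ (le_trans (by simp) hγ) hγ
  intro d
  induction d with
  | zero => exact fun γ hγ _ => hN _ (lowerLeft_inKn (by simpa using hγ))
  | succ d ih =>
    intro γ hγ hγ1
    have hmax : ((max (N - (d + 1) : ℤ) 1 : ℤ) : WithTop ℤ) ≤ γ.orderTop := by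
      rw [WithTop.coe_max, max_le_iff]
      exact ⟨by exact_mod_cast hγ, hγ1⟩
    refine lowerLeft_apply_eq_self_of_succ hlam hv hU hD (le_max_right _ _)
      (fun γ' hγ' => ih γ' (le_trans ?_ hγ') (le_trans ?_ hγ')) hmax
    · exact WithTop.coe_le_coe.2 (by omega)
    · exact WithTop.coe_le_coe.2 (by omega)

end Lifting

theorem statement_11_general
    (F : Type*) [Field F] [Fintype F]
    (k : Type*) [Field k]
    (V : Type*) [AddCommGroup V] [Module k V]
    (ρ : Representation k (GL (Fin 2) (LaurentSeries F)) V)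
    -- `V` is smooth:
    (hsmooth : ∀ v : V, ∃ n : ℕ, 1 ≤ n ∧ ∀ g, InKn n g → ρ g v = v)
    -- `W` is a `G`-stable subspace on which `S` is locally nilpotent:
    (W : Submodule k V) (hWstab : ∀ g, ∀ x ∈ W, ρ g x ∈ W)
    (hWnil : ∀ x ∈ W, ∃ n : ℕ, 1 ≤ n ∧ ((∑ l : F, ρ (SMat l)) ^ n) x = 0)
    (w : V) (lam : k) (hlam : lam ≠ 0) (ψ : (Fˣ × Fˣ) →* kˣ)
    (hI1 : ∀ u, InI1 u → ρ u w - w ∈ W)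
    (hH : ∀ (a : Fˣ × Fˣ) (h : GL (Fin 2) (LaurentSeries F)),
      (h : Matrix (Fin 2) (Fin 2) (LaurentSeries F)) =
        !![HahnSeries.C (a.1 : F), 0; 0, HahnSeries.C (a.2 : F)] →
      ρ h w - (ψ a : k) • w ∈ W)
    (hS : (∑ l : F, ρ (SMat l)) w - lam • w ∈ W) :
    ∃ w' : V, w' - w ∈ W ∧
      (∀ u, InI1 u → ρ u w' = w') ∧
      (∀ (a : Fˣ × Fˣ) (h : GL (Fin 2) (LaurentSeries F)),
        (h : Matrix (Fin 2) (Fin 2) (LaurentSeries F)) =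
          !![HahnSeries.C (a.1 : F), 0; 0, HahnSeries.C (a.2 : F)] →
        ρ h w' = (ψ a : k) • w') ∧
      (∑ l : F, ρ (SMat l)) w' = lam • w' := by
  have hnil : ∀ x ∈ W, ∃ n, (heckeOp ρ ^ n) x = 0 := fun x hx =>
    (hWnil x hx).imp fun _ => And.right
  obtain ⟨n, hn⟩ := hnil _ hS
  obtain ⟨v, hvw, hv⟩ := (heckeOp ρ).exists_sub_mem_apply_eq_smul
    (fun _ => heckeOp_apply_mem hWstab) hlam hS hn
  have hI1v : ∀ u, InI1 u → ρ u v - v ∈ W := fun u hu => by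
    simpa using ρ.apply_sub_smul_mem_of_sub_mem hWstab hvw (κ := 1) (by simpa using hI1 u hu)
  obtain ⟨N, -, hN⟩ := hsmooth v
  have hU := fun b => upperRightHom_apply_eq_self hnil hlam hv hI1v hN (b := b)
  have hD := fun g a d =>
    apply_eq_self_of_coe_eq_diag hnil hlam hv hI1v hU (g := g) (a := a) (d := d)
  have hL := fun γ => lowerLeft_apply_eq_self hlam hv hU hD hN (γ := γ)
  refine ⟨v, hvw, fun u hu => apply_eq_self_of_inI1 hU hD hL hu, fun a h hh => ?_, hv⟩
  exact apply_eq_smul_of_coe_eq_diag hnil hlam hv hU hh (LaurentSeries.orderTop_C a.1.ne_zero)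
    (LaurentSeries.orderTop_C a.2.ne_zero) (ρ.apply_sub_smul_mem_of_sub_mem hWstab hvw (hH a h hh))

/-- the technical core of the proof of Theorem 5.2 of the
paper.  `k` is a field of characteristic `p`, `V` a smooth `k`-linear
representation of `G = GL₂(F((t)))`, `W ⊆ V` a `G`-stable subspace on which
the operator `S = Σ_{λ∈F} (t, Cλ; 0, 1)` is locally nilpotent.  If `w ∈ V` is,
modulo `W`, an `I₁`-invariant `H`-eigenvector of character `ψ` with
`S·w ≡ λ₀·w`, `λ₀ ≠ 0`, then `w` can be corrected by an element of `W` to an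
actual `I₁`-invariant `H`-eigenvector `w'` with `S·w' = λ₀·w'`. -/
theorem statement_11 (p r : ℕ) (hp : p.Prime) (hr : 1 ≤ r)
    (F : Type*) [Field F] [Fintype F] (hF : Fintype.card F = p ^ r)
    (k : Type*) [Field k] [CharP k p]
    (V : Type*) [AddCommGroup V] [Module k V]
    (ρ : Representation k (GL (Fin 2) (LaurentSeries F)) V)
    -- `V` is smooth:
    (hsmooth : ∀ v : V, ∃ n : ℕ, 1 ≤ n ∧ ∀ g, InKn n g → ρ g v = v)
    -- `W` is a `G`-stable subspace on which `S` is locally nilpotent: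
    (W : Submodule k V) (hWstab : ∀ g, ∀ x ∈ W, ρ g x ∈ W)
    (hWnil : ∀ x ∈ W, ∃ n : ℕ, 1 ≤ n ∧ ((∑ l : F, ρ (SMat l)) ^ n) x = 0)
    (w : V) (lam : k) (hlam : lam ≠ 0) (ψ : (Fˣ × Fˣ) →* kˣ)
    (hI1 : ∀ u, InI1 u → ρ u w - w ∈ W)
    (hH : ∀ (a : Fˣ × Fˣ) (h : GL (Fin 2) (LaurentSeries F)),
      (h : Matrix (Fin 2) (Fin 2) (LaurentSeries F)) =
        !![HahnSeries.C (a.1 : F), 0; 0, HahnSeries.C (a.2 : F)] →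
      ρ h w - (ψ a : k) • w ∈ W)
    (hS : (∑ l : F, ρ (SMat l)) w - lam • w ∈ W) :
    ∃ w' : V, w' - w ∈ W ∧
      (∀ u, InI1 u → ρ u w' = w') ∧
      (∀ (a : Fˣ × Fˣ) (h : GL (Fin 2) (LaurentSeries F)),
        (h : Matrix (Fin 2) (Fin 2) (LaurentSeries F)) =
          !![HahnSeries.C (a.1 : F), 0; 0, HahnSeries.C (a.2 : F)] →
        ρ h w' = (ψ a : k) • w') ∧
      (∑ l : F, ρ (SMat l)) w' = lam • w' :=
  statement_11_general F k V ρ hsmooth W hWstab hWnil w lam hlam ψ hI1 hH hS
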